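/- arXiv:0704.1432 — 4 statements merged into one kernel-verified Lean document; each statement's English description precedes it below -/
import Mathlib

section
/- Let Δ_p(t) = t^{(1-p)/2}(t^{p-1} - t^{p-2} + ... - t + 1) for odd p ≥ 1 (the Alexander polynomial of the (2,p) torus knot). Define, for positive integers l, q, r with q, r odd, the Laurent polynomial D_l(t) = Δ_q(t)·Δ_r(t) + l·(t^{-1/2} - t^{1/2})·Δ_{q+r}'(t), where Δ_{q+r}'(t) = t^{(1-(q+r))/2}(-t^{q+r-1} + t^{q+r-2} - ... - t + 1) (the Alexander polynomial of the (2,q+r) torus link, q+r even). Then D_l(t) = t^{-(q+r)/2}( l·t^{q+r} - (2l-1)·t^{q+r-1} + (2l-2)·t^{q+r-2} - ... alternating with coefficients l, 2l-1, 2l-2, 2l-1, ..., 2l-1, l ); in particular its span of exponents (max degree minus min degree in t) equals q+r and its leading coefficient is l. -/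
/-!
With `s = t^{1/2}`, `Δ_p = s^{1-p} · A p` where `A p = ∑_{j<p} (-1)^j s^{2j}`, so that
`s^{q+r} · D_l = P`. The span and the extreme coefficients of `D_l` are therefore the degree,
the leading and the constant coefficient of `P`. The term `X² · A q · A r` has degree at most
`2(q+r) - 2`, so both extreme coefficients of `P` come from `l · (1 - X²) · A (q+r)`: its
constant term is `l`, and its top coefficient is `-l · (-1)^(q+r-1) = l` because `q + r` is even.
-/

open Polynomial Finset

noncomputable def altEvenPoly (R : Type*) [Ring R] (p : ℕ) : R[X] :=
  ∑ j ∈ range p, C ((-1 : R) ^ j) * X ^ (2 * j)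

noncomputable def pretzelPoly {R : Type*} [Ring R] (l : R) (q r : ℕ) : R[X] :=
  X ^ 2 * altEvenPoly R q * altEvenPoly R r + C l * (1 - X ^ 2) * altEvenPoly R (q + r)

section

variable {R : Type*} [Ring R]

theorem coeff_altEvenPoly_two_mul (p n : ℕ) :
    (altEvenPoly R p).coeff (2 * n) = if n < p then (-1 : R) ^ n else 0 := by
  have hinj : ∀ j : ℕ, (2 * n = 2 * j) = (n = j) := fun j => propext (by omega)
  simp only [altEvenPoly, finsetSum_coeff, coeff_C_mul, coeff_X_pow, hinj, mul_ite, mul_one,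
    mul_zero, sum_ite_eq, mem_range]

theorem coeff_altEvenPoly_zero {p : ℕ} (hp : 0 < p) : (altEvenPoly R p).coeff 0 = 1 := by
  simpa [hp] using coeff_altEvenPoly_two_mul (R := R) p 0

theorem natDegree_altEvenPoly_le (p : ℕ) : (altEvenPoly R p).natDegree ≤ 2 * (p - 1) :=
  natDegree_sum_le_of_forall_le _ _ fun j hj =>
    (natDegree_C_mul_le _ _).trans <| (natDegree_X_pow_le _).trans <| by simp at hj; omega

theorem coeff_one_sub_X_sq_mul_add_two (f : R[X]) (k : ℕ) :
    ((1 - X ^ 2) * f).coeff (k + 2) = f.coeff (k + 2) - f.coeff k := by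
  rw [sub_mul, one_mul, coeff_sub, coeff_X_pow_mul]

theorem coeff_pretzelPoly_zero (l : R) {q r : ℕ} (hqr : 0 < q + r) :
    (pretzelPoly l q r).coeff 0 = l := by
  simp [pretzelPoly, mul_coeff_zero, coeff_altEvenPoly_zero hqr]

theorem natDegree_X_sq_mul_altEvenPoly_mul_lt {q r : ℕ} (hq : 0 < q) (hr : 0 < r) :
    (X ^ 2 * altEvenPoly R q * altEvenPoly R r).natDegree < 2 * (q + r) :=
  (natDegree_mul_le_of_le (natDegree_mul_le_of_le (natDegree_X_pow_le 2)
    (natDegree_altEvenPoly_le q)) (natDegree_altEvenPoly_le r)).trans_lt (by omega)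

theorem natDegree_pretzelPoly_le (l : R) {q r : ℕ} (hq : 0 < q) (hr : 0 < r) :
    (pretzelPoly l q r).natDegree ≤ 2 * (q + r) := by
  have h : (C l * (1 - X ^ 2) * altEvenPoly R (q + r)).natDegree ≤ 0 + 2 + 2 * (q + r - 1) :=
    natDegree_mul_le_of_le (natDegree_mul_le_of_le (natDegree_C l).le
      ((natDegree_sub_le _ _).trans (max_le (by simp) (natDegree_X_pow_le 2))))
      (natDegree_altEvenPoly_le _)
  exact natDegree_add_le_of_degree_le (natDegree_X_sq_mul_altEvenPoly_mul_lt hq hr).le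
    (h.trans (by omega))

theorem coeff_pretzelPoly_top (l : R) {q r : ℕ} (hq : 0 < q) (hr : 0 < r) (hqr : Even (q + r)) :
    (pretzelPoly l q r).coeff (2 * (q + r)) = l := by
  obtain ⟨k, hk⟩ : ∃ k, 2 * (q + r) = 2 * (q + r - 1) + 2 ∧ q + r - 1 = 2 * k + 1 := by
    obtain ⟨m, hm⟩ := hqr; exact ⟨m - 1, by omega, by omega⟩
  rw [pretzelPoly, coeff_add,
    coeff_eq_zero_of_natDegree_lt (natDegree_X_sq_mul_altEvenPoly_mul_lt hq hr), zero_add,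
    mul_assoc, coeff_C_mul, hk.1, coeff_one_sub_X_sq_mul_add_two, ← hk.1,
    coeff_altEvenPoly_two_mul, coeff_altEvenPoly_two_mul,
    if_neg (by omega), if_pos (by omega), hk.2, pow_succ, pow_mul]
  simp

end

theorem pretzel_alexander_span_leading_general (l q r : ℕ) (hl : 0 < l)
    (hq : Odd q) (hr : Odd r)
    (A : ℕ → Polynomial ℤ)
    (hA : ∀ p, A p = ∑ j ∈ Finset.range p, C ((-1 : ℤ) ^ j) * X ^ (2 * j))
    (P : Polynomial ℤ)
    (hP : P = X ^ 2 * A q * A r + C (l : ℤ) * (1 - X ^ 2) * A (q + r)) :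
    P.natDegree = 2 * (q + r) ∧ P.leadingCoeff = (l : ℤ) ∧ P.coeff 0 = (l : ℤ) := by
  obtain rfl : A = altEvenPoly ℤ := funext hA
  obtain rfl : P = pretzelPoly (l : ℤ) q r := hP
  have htop := coeff_pretzelPoly_top (l : ℤ) hq.pos hr.pos (hq.add_odd hr)
  have hdeg : (pretzelPoly (l : ℤ) q r).natDegree = 2 * (q + r) :=
    natDegree_eq_of_le_of_coeff_ne_zero (natDegree_pretzelPoly_le _ hq.pos hr.pos)
      (by rw [htop]; exact_mod_cast hl.ne')
  exact ⟨hdeg, by rw [leadingCoeff, hdeg, htop],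
    coeff_pretzelPoly_zero _ (Nat.add_pos_left hq.pos r)⟩

theorem pretzel_alexander_span_leading (l q r : ℕ) (hl : 0 < l)
    (hq : Odd q) (hr : Odd r) (hq0 : 0 < q) (hr0 : 0 < r)
    (A : ℕ → Polynomial ℤ)
    (hA : ∀ p, A p = ∑ j ∈ Finset.range p, C ((-1 : ℤ) ^ j) * X ^ (2 * j))
    (P : Polynomial ℤ)
    (hP : P = X ^ 2 * A q * A r + C (l : ℤ) * (1 - X ^ 2) * A (q + r)) :
    P.natDegree = 2 * (q + r) ∧ P.leadingCoeff = (l : ℤ) ∧ P.coeff 0 = (l : ℤ) :=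
  pretzel_alexander_span_leading_general l q r hl hq hr A hA P hP
end

section
/- Let n−s be even, s ≥ 1, let l_1,...,l_s be nonzero integers, let o_1,...,o_{n-s} be odd integers with |o_i| ≥ 3, α = ∑ sign(o_i) (even), o_i' = sign(o_i)(|o_i|−1). Define G(z) = (∏_{i=1}^s (−l_i))·z^s·( −(α/2)·z·∏_{j=1}^{n-s} ∇_{o_j} + ∑_{j=1}^{n-s} ∇_{o_j'}·∏_{k≠j} ∇_{o_k} ) + ( ∑_{i=1}^s ∏_{j≠i} (−l_j) )·z^{s−1} ∈ ℤ[z], where ∇_m is the (2,m) torus link Conway polynomial. If α ≠ 0 then deg G = s + 1 + ∑_{j=1}^{n-s}(|o_j| − 1), with leading coefficient (−α/2)·∏_{i=1}^s (−l_i). -/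
open Polynomial Finset

/-- Conway polynomial of the (2,m) torus link: ∇₀=0, ∇₁=1, ∇ₘ = z∇ₘ₋₁ + ∇ₘ₋₂. -/
noncomputable def conway : ℕ → Polynomial ℤ
  | 0 => 0
  | 1 => 1
  | (m+2) => X * conway (m+1) + conway m

/-- Signed extension: ∇₋ₘ = (-1)^(m+1) ∇ₘ. -/
noncomputable def conwayZ (m : ℤ) : Polynomial ℤ :=
  if 0 ≤ m then conway m.toNat else (-1) ^ (m.natAbs + 1) * conway m.natAbs

/-! Since `α / 2 ≠ 0`, the term `-(α/2) z^(s+1) ∏ ∇_{o_j}` dominates `G`: every `∇_{o_j}` is monic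
of degree `|o_j| - 1`, every summand `∇_{o_j'} ∏_{k ≠ j} ∇_{o_k}` has smaller degree because
`|o_j'| = |o_j| - 1`, and the last term has degree at most `s - 1`. -/

theorem monic_conway_succ_and_natDegree (m : ℕ) :
    (conway (m + 1)).Monic ∧ (conway (m + 1)).natDegree = m := by
  induction m using Nat.twoStepInduction with
  | zero => simp [conway]
  | one => simp [conway]
  | more m ih₀ ih₁ =>
    obtain ⟨hmonic₁, hdeg₁⟩ := ih₁
    have hdeg : (X * conway (m + 2)).natDegree = m + 2 := by
      rw [natDegree_X_mul hmonic₁.ne_zero, hdeg₁]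
    have hlt : (conway (m + 1)).degree < (X * conway (m + 2)).degree := by
      rw [degree_eq_natDegree ih₀.1.ne_zero, degree_eq_natDegree (monic_X.mul hmonic₁).ne_zero,
        ih₀.2, hdeg]
      exact_mod_cast (by omega : m < m + 2)
    exact ⟨(monic_X.mul hmonic₁).add_of_left hlt, by
      rw [conway, natDegree_add_eq_left_of_degree_lt hlt, hdeg]⟩

theorem monic_conway {m : ℕ} (hm : 0 < m) : (conway m).Monic := by
  obtain ⟨m, rfl⟩ := Nat.exists_eq_add_of_lt hm
  simpa using (monic_conway_succ_and_natDegree m).1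

theorem natDegree_conway (m : ℕ) : (conway m).natDegree = m - 1 := by
  cases m with
  | zero => simp [conway]
  | succ m => simpa using (monic_conway_succ_and_natDegree m).2

theorem conwayZ_of_odd {m : ℤ} (hm : Odd m) : conwayZ m = conway m.natAbs := by
  unfold conwayZ
  split_ifs with h
  · congr 1; omega
  · obtain ⟨k, hk⟩ := Int.natAbs_odd.mpr hm
    rw [Even.neg_one_pow ⟨k + 1, by omega⟩, one_mul]

theorem monic_conwayZ_of_odd {m : ℤ} (hm : Odd m) : (conwayZ m).Monic := by
  rw [conwayZ_of_odd hm]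
  exact monic_conway (Int.natAbs_odd.mpr hm).pos

theorem natDegree_conwayZ (m : ℤ) : (conwayZ m).natDegree = m.natAbs - 1 := by
  unfold conwayZ
  split_ifs with h
  · rw [natDegree_conway]; omega
  · rw [show ((-1 : ℤ[X])) ^ (m.natAbs + 1) = C ((-1) ^ (m.natAbs + 1)) by simp,
      natDegree_C_mul_of_isUnit (isUnit_neg_one.pow _), natDegree_conway]

section DominantTerm

variable {R : Type*} [Semiring R] [NoZeroDivisors R] {a : R} {p q : R[X]} {k : ℕ}

theorem degree_C_mul_X_pow_mul (ha : a ≠ 0) (hp : p ≠ 0) :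
    (C a * X ^ k * p).degree = ↑(k + p.natDegree) := by
  rw [degree_mul, degree_C_mul_X_pow k ha, degree_eq_natDegree hp]
  rfl

theorem natDegree_C_mul_X_pow_mul_add_of_degree_lt (ha : a ≠ 0) (hp : p ≠ 0)
    (hq : q.degree < ↑(k + p.natDegree)) :
    (C a * X ^ k * p + q).natDegree = k + p.natDegree := by
  rw [natDegree_add_eq_left_of_degree_lt (by rwa [degree_C_mul_X_pow_mul ha hp])]
  exact natDegree_eq_of_degree_eq_some (degree_C_mul_X_pow_mul ha hp)

theorem leadingCoeff_C_mul_X_pow_mul_add_of_degree_lt (ha : a ≠ 0) (hp : p ≠ 0)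
    (hq : q.degree < ↑(k + p.natDegree)) :
    (C a * X ^ k * p + q).leadingCoeff = a * p.leadingCoeff := by
  rw [leadingCoeff_add_of_degree_lt' (by rwa [degree_C_mul_X_pow_mul ha hp]), leadingCoeff_mul,
    leadingCoeff_C_mul_X_pow]

end DominantTerm

theorem degree_sum_mul_prod_erase_lt {R ι : Type*} [CommSemiring R] [DecidableEq ι]
    {s : Finset ι} {f g : ι → R[X]} {d : ι → ℕ}
    (hf : ∀ i ∈ s, (f i).natDegree < d i) (hg : ∀ i ∈ s, (g i).natDegree ≤ d i) :
    (∑ i ∈ s, f i * ∏ j ∈ s.erase i, g j).degree < ↑(∑ i ∈ s, d i) := by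
  refine (degree_sum_le _ _).trans_lt ?_
  rw [Finset.sup_lt_iff (WithBot.bot_lt_coe _)]
  intro i hi
  refine degree_le_natDegree.trans_lt (WithBot.coe_lt_coe.mpr ?_)
  calc (f i * ∏ j ∈ s.erase i, g j).natDegree
      ≤ (f i).natDegree + ∑ j ∈ s.erase i, (g j).natDegree :=
        natDegree_mul_le.trans (by gcongr; exact natDegree_prod_le _ _)
    _ < d i + ∑ j ∈ s.erase i, d j :=
        add_lt_add_of_lt_of_le (hf i hi) (sum_le_sum fun j hj => hg j (mem_of_mem_erase hj))
    _ = ∑ i ∈ s, d i := add_sum_erase s d hi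

theorem natAbs_sign_mul_abs_sub_one (m : ℤ) : (m.sign * (|m| - 1)).natAbs = m.natAbs - 1 := by
  rcases eq_or_ne m 0 with rfl | hm
  · simp
  · rw [Int.natAbs_mul, Int.natAbs_sign_of_ne_zero hm, one_mul, Int.abs_eq_natAbs]
    omega

section ConwayProducts

variable {ι : Type*} {s : Finset ι} {o : ι → ℤ}

theorem monic_prod_conwayZ (ho : ∀ j ∈ s, Odd (o j)) : (∏ j ∈ s, conwayZ (o j)).Monic :=
  monic_prod_of_monic _ _ fun j hj => monic_conwayZ_of_odd (ho j hj)

theorem natDegree_prod_conwayZ (ho : ∀ j ∈ s, Odd (o j)) :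
    (∏ j ∈ s, conwayZ (o j)).natDegree = ∑ j ∈ s, ((o j).natAbs - 1) := by
  rw [natDegree_prod_of_monic _ _ fun j hj => monic_conwayZ_of_odd (ho j hj)]
  exact sum_congr rfl fun j _ => natDegree_conwayZ _

theorem degree_sum_conwayZ_sign_mul_prod_erase_lt [DecidableEq ι] (ho : ∀ j ∈ s, 2 ≤ |o j|) :
    (∑ j ∈ s, conwayZ ((o j).sign * (|o j| - 1)) * ∏ k ∈ s.erase j, conwayZ (o k)).degree <
      ↑(∑ j ∈ s, ((o j).natAbs - 1)) := by
  refine degree_sum_mul_prod_erase_lt (fun j hj => ?_) fun j _ => (natDegree_conwayZ _).le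
  have := ho j hj
  rw [Int.abs_eq_natAbs] at this
  rw [natDegree_conwayZ, natAbs_sign_mul_abs_sub_one]
  omega

end ConwayProducts

theorem pretzel_link_conway_degree_even_general (n s : ℕ)
    (l : ℕ → ℤ) (hl : ∀ i ∈ Finset.Icc 1 s, l i ≠ 0)
    (o : ℕ → ℤ) (ho : ∀ j ∈ Finset.Icc 1 (n - s), Odd (o j) ∧ 3 ≤ |o j|)
    (α : ℤ)
    (hα2 : 2 ∣ α) (hα0 : α ≠ 0)
    (G : Polynomial ℤ)
    (hG : G = C (∏ i ∈ Finset.Icc 1 s, (- l i)) * X ^ s *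
        (- C (α / 2) * X * ∏ j ∈ Finset.Icc 1 (n - s), conwayZ (o j)
         + ∑ j ∈ Finset.Icc 1 (n - s), conwayZ ((o j).sign * (|o j| - 1)) *
             ∏ k ∈ (Finset.Icc 1 (n - s)).erase j, conwayZ (o k))
      + C (∑ i ∈ Finset.Icc 1 s, ∏ j ∈ (Finset.Icc 1 s).erase i, (- l j)) * X ^ (s - 1)) :
    G.natDegree = s + 1 + ∑ j ∈ Finset.Icc 1 (n - s), ((o j).natAbs - 1) ∧
    G.leadingCoeff = (-(α / 2)) * ∏ i ∈ Finset.Icc 1 s, (- l i) := by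
  set J := Finset.Icc 1 (n - s)
  set Q := ∏ j ∈ J, conwayZ (o j)
  set B := ∑ j ∈ J, conwayZ ((o j).sign * (|o j| - 1)) * ∏ k ∈ J.erase j, conwayZ (o k)
  set P := C (-(α / 2)) * X ^ 1 * Q + B
  have hhalf : -(α / 2) ≠ 0 := by omega
  have hc : ∏ i ∈ Finset.Icc 1 s, -l i ≠ 0 :=
    prod_ne_zero_iff.mpr fun i hi => neg_ne_zero.mpr (hl i hi)
  have hQ : Q.Monic := monic_prod_conwayZ fun j hj => (ho j hj).1
  have hQdeg : Q.natDegree = ∑ j ∈ J, ((o j).natAbs - 1) :=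
    natDegree_prod_conwayZ fun j hj => (ho j hj).1
  have hB : B.degree < ↑(1 + Q.natDegree) :=
    (degree_sum_conwayZ_sign_mul_prod_erase_lt fun j hj => by linarith [(ho j hj).2]).trans
      (WithBot.coe_lt_coe.mpr (Nat.lt_one_add_iff.mpr hQdeg.ge))
  have hPdeg : P.natDegree = 1 + Q.natDegree :=
    natDegree_C_mul_X_pow_mul_add_of_degree_lt hhalf hQ.ne_zero hB
  have hPlead : P.leadingCoeff = -(α / 2) := by
    rw [leadingCoeff_C_mul_X_pow_mul_add_of_degree_lt hhalf hQ.ne_zero hB, hQ.leadingCoeff, mul_one]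
  have hP : P ≠ 0 := leadingCoeff_ne_zero.mp (hPlead ▸ hhalf)
  have htail := (degree_C_mul_X_pow_le (s - 1)
    (∑ i ∈ Finset.Icc 1 s, ∏ j ∈ (Finset.Icc 1 s).erase i, -l j)).trans_lt
    (WithBot.coe_lt_coe.mpr (by omega : s - 1 < s + P.natDegree))
  have hGP : G = C (∏ i ∈ Finset.Icc 1 s, -l i) * X ^ s * P +
      C (∑ i ∈ Finset.Icc 1 s, ∏ j ∈ (Finset.Icc 1 s).erase i, -l j) * X ^ (s - 1) := by
    simp only [hG, P, pow_one, C_neg]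
  rw [hGP, natDegree_C_mul_X_pow_mul_add_of_degree_lt hc hP htail,
    leadingCoeff_C_mul_X_pow_mul_add_of_degree_lt hc hP htail, hPlead, hPdeg, hQdeg]
  exact ⟨by omega, mul_comm _ _⟩

theorem pretzel_link_conway_degree_even (n s : ℕ) (hs : 1 ≤ s) (hsn : s ≤ n)
    (hns : Even (n - s))
    (l : ℕ → ℤ) (hl : ∀ i ∈ Finset.Icc 1 s, l i ≠ 0)
    (o : ℕ → ℤ) (ho : ∀ j ∈ Finset.Icc 1 (n - s), Odd (o j) ∧ 3 ≤ |o j|)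
    (α : ℤ) (hα : α = ∑ j ∈ Finset.Icc 1 (n - s), (o j).sign)
    (hα2 : 2 ∣ α) (hα0 : α ≠ 0)
    (G : Polynomial ℤ)
    (hG : G = C (∏ i ∈ Finset.Icc 1 s, (- l i)) * X ^ s *
        (- C (α / 2) * X * ∏ j ∈ Finset.Icc 1 (n - s), conwayZ (o j)
         + ∑ j ∈ Finset.Icc 1 (n - s), conwayZ ((o j).sign * (|o j| - 1)) *
             ∏ k ∈ (Finset.Icc 1 (n - s)).erase j, conwayZ (o k))
      + C (∑ i ∈ Finset.Icc 1 s, ∏ j ∈ (Finset.Icc 1 s).erase i, (- l j)) * X ^ (s - 1)) :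
    G.natDegree = s + 1 + ∑ j ∈ Finset.Icc 1 (n - s), ((o j).natAbs - 1) ∧
    G.leadingCoeff = (-(α / 2)) * ∏ i ∈ Finset.Icc 1 s, (- l i) :=
  pretzel_link_conway_degree_even_general n s l hl o ho α hα2 hα0 G hG
end

section
/- Let n be even, let e = 2l with l ≠ 0, let o_2,...,o_n be odd with |o_i| ≥ 3, β = sign(e), α = ∑_{i=2}^n sign(o_i) (so α is odd, β = ±1 and α+β is even), e' = sign(e)(|e|−1). Define H(z) = ∇_{e'}·∏_{i=2}^n ∇_{o_i} + ∇_e·( −((α+β)/2)·z·∏_{i=2}^n ∇_{o_i} + ∑_{i=2}^n ∇_{o_i'}·∏_{j≠i} ∇_{o_j} ). If α + β ≠ 0, then deg H = |e| + ∑_{i=2}^n (|o_i| − 1), with leading coefficient −sign(e)·(α+β)/2. -/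
open Polynomial Finset

/- Conway polynomial of the even-n pretzel knot K(2l, o₂, …, oₙ) (equation (6)),
denominators cleared:
H = ∇_{e'}·∏∇_{oᵢ} + ∇ₑ·( -((α+β)/2)·z·∏∇_{oᵢ} + ∑∇_{oᵢ'}·∏_{j≠i}∇_{oⱼ} ),
e = 2l, e' = sign(e)(|e|-1).  If α+β ≠ 0 then deg H = |e| + ∑(|oᵢ|-1), with
leading coefficient -sign(e)·(α+β)/2. -/
lemma conway_aux : ∀ m : ℕ, (conway (m+1)).Monic ∧ (conway (m+1)).natDegree = m := by
  intro m
  induction m using Nat.strong_induction_on with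
  | _ m ih =>
    match m with
    | 0 => simp [conway, monic_one]
    | 1 =>
      have h : conway 2 = X := by simp [conway]
      simp [h, monic_X]
    | (k+2) =>
      have h1 := ih (k+1) (by omega)
      have h0 := ih k (by omega)
      have heq : conway (k+3) = X * conway (k+2) + conway (k+1) := rfl
      have hm : (X * conway (k+2)).Monic := monic_X.mul h1.1
      have hd : (X * conway (k+2)).natDegree = k+2 := by
        rw [natDegree_mul X_ne_zero h1.1.ne_zero, natDegree_X, h1.2]; omega
      have hlt : (conway (k+1)).degree < (X * conway (k+2)).degree := by
        apply lt_of_le_of_lt (degree_le_natDegree)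
        rw [degree_eq_natDegree hm.ne_zero, hd, h0.2]
        exact_mod_cast by omega
      constructor
      · rw [heq]; exact hm.add_of_left hlt
      · rw [heq, natDegree_eq_of_degree_eq (degree_add_eq_left_of_degree_lt hlt), hd]

lemma conway_natDegree_le (m : ℕ) : (conway m).natDegree ≤ m - 1 := by
  match m with
  | 0 => simp [conway]
  | (k+1) => rw [(conway_aux k).2]; omega

lemma conwayZ_odd {m : ℤ} (h : Odd m) : conwayZ m = conway m.natAbs := by
  unfold conwayZ
  split
  · congr 1; omega
  · have hodd : Odd m.natAbs := Int.natAbs_odd.mpr h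
    have : Even (m.natAbs + 1) := Odd.add_one hodd
    rw [this.neg_one_pow, one_mul]

lemma conwayZ_two_mul (l : ℤ) (hl : l ≠ 0) :
    conwayZ (2*l) = C ((2*l).sign) * conway (2*l).natAbs := by
  unfold conwayZ
  rcases hl.lt_or_gt with h | h
  · have h2 : 2*l < 0 := by omega
    rw [if_neg (by omega), Int.sign_eq_neg_one_of_neg h2]
    have heven : Even ((2*l).natAbs) := by
      refine Int.natAbs_even.mpr ⟨l, by ring⟩
    have : Odd ((2*l).natAbs + 1) := Even.add_one heven
    rw [this.neg_one_pow]
    simp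
  · have h2 : 0 < 2*l := by omega
    rw [if_pos (by omega), Int.sign_eq_one_of_pos h2]
    simp
    congr 1
    omega

lemma conwayZ_natDegree_le (m : ℤ) : (conwayZ m).natDegree ≤ m.natAbs - 1 := by
  unfold conwayZ
  split
  · have : m.toNat = m.natAbs := by omega
    rw [this]; exact conway_natDegree_le _
  · rcases Nat.even_or_odd (m.natAbs + 1) with h | h
    · rw [h.neg_one_pow, one_mul]; exact conway_natDegree_le _
    · rw [h.neg_one_pow, neg_one_mul, natDegree_neg]; exact conway_natDegree_le _

theorem pretzel_knot_conway_degree_even_n (n : ℕ) (hn : Even n) (hn2 : 2 ≤ n)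
    (l : ℤ) (hl : l ≠ 0)
    (o : ℕ → ℤ) (ho : ∀ i ∈ Finset.Icc 2 n, Odd (o i) ∧ 3 ≤ |o i|)
    (α β : ℤ) (hβ : β = (2 * l).sign) (hα : α = ∑ i ∈ Finset.Icc 2 n, (o i).sign)
    (h2 : 2 ∣ (α + β)) (h0 : α + β ≠ 0)
    (H : Polynomial ℤ)
    (hH : H = conwayZ ((2 * l).sign * (|2 * l| - 1)) * ∏ i ∈ Finset.Icc 2 n, conwayZ (o i)
      + conwayZ (2 * l) *
        (- C ((α + β) / 2) * X * ∏ i ∈ Finset.Icc 2 n, conwayZ (o i)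
         + ∑ i ∈ Finset.Icc 2 n, conwayZ ((o i).sign * (|o i| - 1)) *
             ∏ j ∈ (Finset.Icc 2 n).erase i, conwayZ (o j))) :
    H.natDegree = (2 * l).natAbs + ∑ i ∈ Finset.Icc 2 n, ((o i).natAbs - 1) ∧
    H.leadingCoeff = -((2 * l).sign * ((α + β) / 2)) := by
  set s : Finset ℕ := Finset.Icc 2 n with hs
  set E : ℕ := (2 * l).natAbs with hE
  have hE2 : 2 ≤ E := by omega
  set S : ℕ := ∑ i ∈ s, ((o i).natAbs - 1) with hS
  set c : ℤ := (α + β) / 2 with hc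
  set sg : ℤ := (2 * l).sign with hsg
  have hsgne : sg ≠ 0 := by
    rw [hsg, Ne, Int.sign_eq_zero_iff_zero]; omega
  have hcne : c ≠ 0 := by
    intro h
    apply h0
    have := Int.ediv_mul_cancel h2
    rw [← hc, h, zero_mul] at this
    omega
  -- facts about the odd factors
  have hoZ : ∀ i ∈ s, conwayZ (o i) = conway (o i).natAbs :=
    fun i hi => conwayZ_odd (ho i hi).1
  have ho3 : ∀ i ∈ s, 3 ≤ (o i).natAbs := by
    intro i hi
    have h := (ho i hi).2
    rw [Int.abs_eq_natAbs] at h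
    omega
  have hoM : ∀ i ∈ s, (conwayZ (o i)).Monic := by
    intro i hi
    rw [hoZ i hi]
    have := (conway_aux ((o i).natAbs - 1)).1
    rwa [show (o i).natAbs - 1 + 1 = (o i).natAbs by have := ho3 i hi; omega] at this
  have hoD : ∀ i ∈ s, (conwayZ (o i)).natDegree = (o i).natAbs - 1 := by
    intro i hi
    rw [hoZ i hi]
    have := (conway_aux ((o i).natAbs - 1)).2
    rwa [show (o i).natAbs - 1 + 1 = (o i).natAbs by have := ho3 i hi; omega] at this
  set Pr : Polynomial ℤ := ∏ i ∈ s, conwayZ (o i) with hPr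
  have hPrM : Pr.Monic := monic_prod_of_monic _ _ hoM
  have hPrD : Pr.natDegree = S := by
    rw [hPr, natDegree_prod _ _ (fun i hi => (hoM i hi).ne_zero)]
    exact Finset.sum_congr rfl hoD
  -- conway E
  have hCEM : (conway E).Monic := by
    have := (conway_aux (E - 1)).1
    rwa [show E - 1 + 1 = E by omega] at this
  have hCED : (conway E).natDegree = E - 1 := by
    have := (conway_aux (E - 1)).2
    rwa [show E - 1 + 1 = E by omega] at this
  -- the dominant part P
  set P : Polynomial ℤ := conwayZ (2 * l) * (- C c * X * Pr) with hPdef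
  have hPform : P = C (-(sg * c)) * (conway E * (X * Pr)) := by
    rw [hPdef, conwayZ_two_mul l hl, ← hsg, ← hE, map_neg, map_mul]
    ring
  have hMM : (conway E * (X * Pr)).Monic := hCEM.mul (monic_X.mul hPrM)
  have hMD : (conway E * (X * Pr)).natDegree = E + S := by
    rw [hCEM.natDegree_mul (monic_X.mul hPrM), monic_X.natDegree_mul hPrM,
      hCED, natDegree_X, hPrD]
    omega
  have hlcne : -(sg * c) ≠ 0 := by
    simp only [neg_ne_zero]
    exact mul_ne_zero hsgne hcne
  have hPD : P.natDegree = E + S := by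
    rw [hPform, natDegree_C_mul hlcne, hMD]
  have hPlc : P.leadingCoeff = -(sg * c) := by
    rw [hPform, leadingCoeff_mul, leadingCoeff_C, hMM.leadingCoeff, mul_one]
  -- the remainder Q
  set Tsum : Polynomial ℤ := ∑ i ∈ s, conwayZ ((o i).sign * (|o i| - 1)) *
      ∏ j ∈ s.erase i, conwayZ (o j) with hTsum
  set Q : Polynomial ℤ := conwayZ (sg * (|2 * l| - 1)) * Pr + conwayZ (2 * l) * Tsum with hQdef
  have hH' : H = Q + P := by rw [hH, hQdef, hPdef]; ring
  -- degree bound for Q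
  have habs : |2 * l| = (E : ℤ) := Int.abs_eq_natAbs _
  have hNA : (sg * (|2 * l| - 1)).natAbs = E - 1 := by
    rw [hsg, Int.natAbs_mul, Int.natAbs_sign_of_ne_zero (by omega : 2 * l ≠ 0),
      one_mul, habs]
    omega
  have hQ1 : (conwayZ (sg * (|2 * l| - 1)) * Pr).natDegree ≤ (E - 2) + S := by
    refine le_trans (natDegree_mul_le) (add_le_add ?_ hPrD.le)
    refine le_trans (conwayZ_natDegree_le _) ?_
    omega
  have hTD : Tsum.natDegree ≤ S - 1 := by
    rw [hTsum]
    apply natDegree_sum_le_of_forall_le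
    intro i hi
    have hsplit : (∑ j ∈ s.erase i, ((o j).natAbs - 1)) + ((o i).natAbs - 1) = S :=
      Finset.sum_erase_add s _ hi
    have hi3 := ho3 i hi
    refine le_trans natDegree_mul_le ?_
    have hNAi : ((o i).sign * (|o i| - 1)).natAbs = (o i).natAbs - 1 := by
      rw [Int.natAbs_mul, Int.natAbs_sign_of_ne_zero (by omega : o i ≠ 0),
        one_mul, Int.abs_eq_natAbs]
      omega
    have h1 : (conwayZ ((o i).sign * (|o i| - 1))).natDegree ≤ (o i).natAbs - 2 := by
      refine le_trans (conwayZ_natDegree_le _) ?_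
      omega
    have h2' : (∏ j ∈ s.erase i, conwayZ (o j)).natDegree ≤
        ∑ j ∈ s.erase i, ((o j).natAbs - 1) := by
      refine le_trans (natDegree_prod_le _ _) ?_
      exact Finset.sum_le_sum fun j hj => (hoD j (Finset.mem_of_mem_erase hj)).le
    have := add_le_add h1 h2'
    omega
  have hQ2 : (conwayZ (2 * l) * Tsum).natDegree ≤ (E - 1) + (S - 1) := by
    refine le_trans natDegree_mul_le (add_le_add ?_ hTD)
    refine le_trans (conwayZ_natDegree_le _) ?_
    rw [← hE]
  have hQD : Q.natDegree < E + S := by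
    refine lt_of_le_of_lt (natDegree_add_le _ _) (max_lt ?_ ?_) <;> omega
  -- conclusion
  have hHc : H.coeff (E + S) = -(sg * c) := by
    rw [hH', coeff_add, coeff_eq_zero_of_natDegree_lt hQD, zero_add, ← hPD,
      coeff_natDegree, hPlc]
  have hHdle : H.natDegree ≤ E + S := by
    rw [hH']
    exact le_trans (natDegree_add_le _ _) (max_le hQD.le hPD.le)
  have hdeg : H.natDegree = E + S :=
    le_antisymm hHdle (le_natDegree_of_ne_zero (by rw [hHc]; exact hlcne))
  refine ⟨hdeg, ?_⟩
  rw [Polynomial.leadingCoeff, hdeg, hHc]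
end

section
/- Let q, r be positive odd integers with 1/2 + 1/q + 1/r ≤ 1, and l ≥ 1. Let Δ(t) ∈ ℤ[t^{1/2}, t^{-1/2}] be defined by Δ = Δ_q·Δ_r + l·(t^{-1/2} − t^{1/2})·Δ'_{q+r}, with Δ_p, Δ'_{2m} the explicit torus-link Alexander polynomials. Then the breadth of Δ in t is q + r, and the extreme coefficients of Δ are l and l. -/
open Polynomial Finset

private lemma A_deg_le (p : ℕ) :
    (∑ j ∈ Finset.range p, C ((-1 : ℤ) ^ j) * X ^ (2 * j)).natDegree ≤ 2 * p - 2 := by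
  apply Polynomial.natDegree_sum_le_of_forall_le
  intro j hj
  calc (C ((-1 : ℤ) ^ j) * X ^ (2 * j)).natDegree ≤ (X ^ (2 * j) : Polynomial ℤ).natDegree :=
        natDegree_C_mul_le _ _
    _ = 2 * j := natDegree_X_pow _
    _ ≤ 2 * p - 2 := by
        have := Finset.mem_range.mp hj; omega

private lemma A_coeff_even (p m : ℕ) (hm : m < p) :
    (∑ j ∈ Finset.range p, C ((-1 : ℤ) ^ j) * X ^ (2 * j)).coeff (2 * m) = (-1 : ℤ) ^ m := by
  rw [finset_sum_coeff]
  simp only [coeff_C_mul, coeff_X_pow, mul_ite, mul_one, mul_zero]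
  rw [Finset.sum_eq_single m]
  · simp
  · intro b _ hbm
    have : 2 * m ≠ 2 * b := by omega
    simp [this]
  · intro h
    exact absurd (Finset.mem_range.mpr hm) h

/- Polynomial part of Theorem 3: for positive odd q, r with
1/2 + 1/q + 1/r ≤ 1 and l ≥ 1, the Alexander polynomial
Δ = Δ_q·Δ_r + l·(s⁻¹ - s)·Δ'_{q+r} of K(-2l,q,r) has breadth q + r in t
with both extreme coefficients equal to l.  Clearing denominators
(P = s^{q+r}·Δ, with A p = ∑_{j<p}(-1)^j s^{2j} so Δ_p = s^{1-p}·A p):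
P has degree 2(q+r), leading coefficient l and constant coefficient l. -/
theorem pretzel_alexander_breadth_genus (l q r : ℕ) (hl : 1 ≤ l)
    (hq : Odd q) (hr : Odd r) (hq0 : 0 < q) (hr0 : 0 < r)
    (hhyp : (1 : ℚ) / 2 + 1 / q + 1 / r ≤ 1)
    (A : ℕ → Polynomial ℤ)
    (hA : ∀ p, A p = ∑ j ∈ Finset.range p, C ((-1 : ℤ) ^ j) * X ^ (2 * j))
    (P : Polynomial ℤ)
    (hP : P = X ^ 2 * A q * A r + C (l : ℤ) * (1 - X ^ 2) * A (q + r)) :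
    P.natDegree = 2 * (q + r) ∧ P.leadingCoeff = (l : ℤ) ∧ P.coeff 0 = (l : ℤ) := by
  set N := 2 * (q + r) with hN
  -- degree bounds on A
  have hAq_deg : (A q).natDegree ≤ 2 * q - 2 := by rw [hA]; exact A_deg_le q
  have hAr_deg : (A r).natDegree ≤ 2 * r - 2 := by rw [hA]; exact A_deg_le r
  have hAqr_deg : (A (q + r)).natDegree ≤ 2 * (q + r) - 2 := by rw [hA]; exact A_deg_le (q + r)
  -- first summand has small degree
  have hfirst_deg : (X ^ 2 * A q * A r : Polynomial ℤ).natDegree ≤ N - 2 := by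
    calc (X ^ 2 * A q * A r).natDegree
        ≤ (X ^ 2 * A q).natDegree + (A r).natDegree := natDegree_mul_le
      _ ≤ ((X ^ 2 : Polynomial ℤ).natDegree + (A q).natDegree) + (A r).natDegree := by
          exact Nat.add_le_add_right natDegree_mul_le _
      _ ≤ (2 + (2 * q - 2)) + (2 * r - 2) := by
          have : (X ^ 2 : Polynomial ℤ).natDegree = 2 := natDegree_X_pow 2
          omega
      _ ≤ N - 2 := by omega
  -- coefficient of A (q+r) at top
  have hqr_even : Even (q + r) := hq.add_odd hr
  have hAqr_top : (A (q + r)).coeff (2 * ((q + r) - 1)) = -1 := by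
    rw [hA, A_coeff_even (q + r) ((q + r) - 1) (by omega)]
    have hodd : Odd ((q + r) - 1) := by
      rcases hqr_even with ⟨k, hk⟩
      exact ⟨k - 1, by omega⟩
    exact Odd.neg_one_pow hodd
  have hAqr_coeff_N : (A (q + r)).coeff N = 0 := by
    apply coeff_eq_zero_of_natDegree_lt
    omega
  -- coefficient of second summand at N
  have hsecond_N : (C (l : ℤ) * (1 - X ^ 2) * A (q + r)).coeff N = (l : ℤ) := by
    have expand : C (l : ℤ) * (1 - X ^ 2) * A (q + r)
        = C (l : ℤ) * A (q + r) - C (l : ℤ) * (X ^ 2 * A (q + r)) := by ring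
    rw [expand, coeff_sub, coeff_C_mul, coeff_C_mul, hAqr_coeff_N]
    have hX2 : (X ^ 2 * A (q + r)).coeff N = (A (q + r)).coeff (2 * ((q + r) - 1)) := by
      have : N = 2 * ((q + r) - 1) + 2 := by omega
      rw [this, coeff_X_pow_mul]
    rw [hX2, hAqr_top]
    ring
  have hfirst_N : (X ^ 2 * A q * A r : Polynomial ℤ).coeff N = 0 := by
    apply coeff_eq_zero_of_natDegree_lt
    omega
  have hPN : P.coeff N = (l : ℤ) := by
    rw [hP, coeff_add, hfirst_N, hsecond_N, zero_add]
  have hP_deg_le : P.natDegree ≤ N := by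
    rw [hP]
    apply natDegree_add_le_of_degree_le
    · omega
    · calc (C (l : ℤ) * (1 - X ^ 2) * A (q + r)).natDegree
          ≤ (C (l : ℤ) * (1 - X ^ 2)).natDegree + (A (q + r)).natDegree := natDegree_mul_le
        _ ≤ ((C (l : ℤ)).natDegree + (1 - X ^ 2 : Polynomial ℤ).natDegree)
              + (A (q + r)).natDegree := Nat.add_le_add_right natDegree_mul_le _
        _ ≤ (0 + 2) + (2 * (q + r) - 2) := by
            have h1 : (C (l : ℤ)).natDegree = 0 := natDegree_C _
            have h2 : (1 - X ^ 2 : Polynomial ℤ).natDegree ≤ 2 := by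
              apply le_trans (natDegree_sub_le _ _)
              simp [natDegree_X_pow]
            omega
        _ ≤ N := by omega
  have hP_deg : P.natDegree = N := by
    have : (l : ℤ) ≠ 0 := by positivity
    have hne : P.coeff N ≠ 0 := hPN ▸ this
    have := le_natDegree_of_ne_zero hne
    omega
  refine ⟨hP_deg, ?_, ?_⟩
  · rw [Polynomial.leadingCoeff, hP_deg, hPN]
  · rw [hP, coeff_add, mul_coeff_zero, mul_coeff_zero, mul_coeff_zero]
    have h1 : (X ^ 2 : Polynomial ℤ).coeff 0 = 0 := by simp [coeff_X_pow]
    have h2 : (A (q + r)).coeff 0 = 1 := by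
      have := A_coeff_even (q + r) 0 (by omega)
      simpa using (hA (q + r)) ▸ this
    rw [h1, h2]
    simp [coeff_X_pow]
end
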